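/- There exists a constant C = C(d, k) such that, for all a = (a_1, …, a_k) ∈ ℤ^k with a ≠ 0 and all reals M, H ≥ 1, one has N_a(M, H) ≤ C·M^{k−1}·(H/(M^{d−1}·max_i |a_i|) + 1). -/
import Mathlib


/-- `N_a(M, H)`: the number of `x ∈ ℤ^k` with `M ≤ x_j ≤ 2M` for all `j` and
`|a_1x_1^d + ⋯ + a_kx_k^d| ≤ H`. -/
noncomputable def Ncount (d k : ℕ) (a : Fin k → ℤ) (M H : ℝ) : ℕ :=
  Set.ncard {x : Fin k → ℤ | (∀ i, M ≤ (x i : ℝ) ∧ (x i : ℝ) ≤ 2 * M) ∧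
    |(∑ i, (a i : ℝ) * (x i : ℝ) ^ d)| ≤ H}

lemma floor_sub_floor_le_aux (u v : ℝ) : ⌊u⌋ - ⌊v⌋ ≤ ⌊u - v⌋ + 1 := by
  have h1 : (⌊u⌋ : ℝ) ≤ u := Int.floor_le u
  have h2 : v < (⌊v⌋ : ℝ) + 1 := Int.lt_floor_add_one v
  have h3 : u - v < (⌊u - v⌋ : ℝ) + 1 := Int.lt_floor_add_one (u - v)
  have h4 : (⌊u⌋ - ⌊v⌋ : ℤ) < ⌊u - v⌋ + 2 := by
    have : ((⌊u⌋ - ⌊v⌋ : ℤ) : ℝ) < ((⌊u - v⌋ + 2 : ℤ) : ℝ) := by push_cast; linarith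
    exact_mod_cast this
  omega

/-- Lemma 2a: for `a ≠ 0` one has
`N_a(M, H) ≪_{d,k} M^{k−1}(H/(M^{d−1}·max_i |a_i|) + 1)`. -/
theorem Ncount_general_bound (d k : ℕ) (hd : 2 ≤ d) (hk : 2 ≤ k) :
    ∃ C > (0 : ℝ), ∀ (a : Fin k → ℤ), a ≠ 0 → ∀ M H : ℝ, 1 ≤ M → 1 ≤ H →
      (Ncount d k a M H : ℝ)
        ≤ C * M ^ (k - 1) *
          (H / (M ^ (d - 1) * ((Finset.univ.sup fun i => (a i).natAbs : ℕ) : ℝ)) + 1) := by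
  classical
  refine ⟨2 ^ k, by positivity, ?_⟩
  intro a ha M H hM hH
  set A : ℕ := Finset.univ.sup fun i => (a i).natAbs with hA
  -- A ≥ 1
  have hane : ∃ i, a i ≠ 0 := by
    by_contra h
    push_neg at h
    exact ha (funext h)
  obtain ⟨j, hj⟩ := hane
  have hA1 : 1 ≤ A := by
    have h1 := Finset.le_sup (f := fun i => (a i).natAbs) (Finset.mem_univ j)
    have h2 := Int.natAbs_pos.mpr hj
    simp only [← hA] at h1
    omega
  have hApos : (0 : ℝ) < (A : ℝ) := by exact_mod_cast hA1
  -- choose i0 achieving the sup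
  haveI : Nonempty (Fin k) := ⟨⟨0, by omega⟩⟩
  obtain ⟨i0, -, hi0⟩ := Finset.exists_mem_eq_sup Finset.univ Finset.univ_nonempty
    (fun i => (a i).natAbs)
  have hMpos : (0 : ℝ) < M := by linarith
  set g : ℝ := M ^ (d - 1) * (A : ℝ) with hg
  have hgpos : (0 : ℝ) < g := by positivity
  have hM1 : (1 : ℝ) ≤ M ^ (d - 1) := one_le_pow₀ hM
  -- the big finset
  set I : Finset ℤ := Finset.Icc ⌈M⌉ ⌊2 * M⌋ with hI
  set s : Finset (Fin k → ℤ) :=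
    (Fintype.piFinset fun _ : Fin k => I).filter
      (fun x => |(∑ i, (a i : ℝ) * (x i : ℝ) ^ d)| ≤ H) with hs
  -- Step 1 : Ncount ≤ s.card
  have step1 : Ncount d k a M H ≤ s.card := by
    rw [← Set.ncard_coe_finset]
    apply Set.ncard_le_ncard _ (s.finite_toSet)
    intro x hx
    simp only [Set.mem_setOf_eq] at hx
    simp only [hs, Finset.coe_filter, Set.mem_setOf_eq, Fintype.mem_piFinset]
    refine ⟨fun i => ?_, hx.2⟩
    rw [hI, Finset.mem_Icc]
    exact ⟨Int.ceil_le.mpr (hx.1 i).1, Int.le_floor.mpr (hx.1 i).2⟩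
  set n : ℕ := (⌊2 * H / g⌋).toNat + 2 with hn
  set B' : Finset (Fin k → ℤ) :=
    Fintype.piFinset fun i : Fin k => if i = i0 then ({0} : Finset ℤ) else I with hB'
  set π : (Fin k → ℤ) → (Fin k → ℤ) := fun x => Function.update x i0 0 with hπ
  -- elements of I, as reals, are in [M, 2M]
  have hImem : ∀ z : ℤ, z ∈ I → M ≤ (z : ℝ) ∧ (z : ℝ) ≤ 2 * M := by
    intro z hz
    rw [hI, Finset.mem_Icc] at hz
    exact ⟨le_trans (Int.le_ceil M) (by exact_mod_cast hz.1),
      le_trans (by exact_mod_cast hz.2) (Int.floor_le _)⟩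
  -- Step 2 : s.card ≤ n * B'.card
  have step2 : s.card ≤ n * B'.card := by
    apply Finset.card_le_mul_card_image_of_maps_to (f := π) (t := B')
    · intro x hx
      rw [hs, Finset.mem_filter, Fintype.mem_piFinset] at hx
      rw [hB', Fintype.mem_piFinset]
      intro i
      by_cases hi : i = i0
      · subst hi; simp [hπ]
      · simp only [if_neg hi]
        simp only [hπ]
        rw [Function.update_of_ne hi]
        exact hx.1 i
    · -- fiber bound
      intro y hy
      set c : ℝ := ∑ i ∈ Finset.univ.erase i0, (a i : ℝ) * (y i : ℝ) ^ d with hc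
      set φ : (Fin k → ℤ) → ℤ := fun x => ⌊((a i0 : ℝ) * (x i0 : ℝ) ^ d) / g⌋ with hφ
      have key : ∀ x ∈ s.filter (fun x => π x = y),
          M ≤ (x i0 : ℝ) ∧ (x i0 : ℝ) ≤ 2 * M ∧
          -H - c ≤ (a i0 : ℝ) * (x i0 : ℝ) ^ d ∧ (a i0 : ℝ) * (x i0 : ℝ) ^ d ≤ H - c := by
        intro x hx
        rw [Finset.mem_filter] at hx
        obtain ⟨hxs, hxy⟩ := hx
        rw [hs, Finset.mem_filter, Fintype.mem_piFinset] at hxs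
        have hxI := hImem _ (hxs.1 i0)
        have hsum : ∑ i, (a i : ℝ) * (x i : ℝ) ^ d = (a i0 : ℝ) * (x i0 : ℝ) ^ d + c := by
          rw [hc]
          have : ∀ i ∈ Finset.univ.erase i0, (a i : ℝ) * (y i : ℝ) ^ d
              = (a i : ℝ) * (x i : ℝ) ^ d := by
            intro i hi
            have hine : i ≠ i0 := (Finset.mem_erase.mp hi).1
            rw [← hxy]; simp only [hπ]; rw [Function.update_of_ne hine]
          rw [Finset.sum_congr rfl this, ← Finset.add_sum_erase _ _ (Finset.mem_univ i0)]
        have habs := hxs.2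
        rw [hsum, abs_le] at habs
        exact ⟨hxI.1, hxI.2, by linarith [habs.1], by linarith [habs.2]⟩
      have hinj : Set.InjOn φ (s.filter (fun x => π x = y)) := by
        intro x hx x' hx' hφeq
        have hkx := key x hx
        have hkx' := key x' hx'
        rw [Finset.mem_coe, Finset.mem_filter] at hx hx'
        funext i
        by_cases hi : i = i0
        · rw [hi]
          by_contra hne
          -- real gap lemma
          have gaplem : ∀ p q : ℤ, M ≤ (p : ℝ) → p < q →
              (p : ℝ) ^ d + M ^ (d - 1) ≤ (q : ℝ) ^ d := by
            intro p q hp hpq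
            have hp1 : (1 : ℝ) ≤ (p : ℝ) := le_trans hM hp
            have hq : (p : ℝ) + 1 ≤ (q : ℝ) := by exact_mod_cast hpq
            have hqpos : (0 : ℝ) ≤ (q : ℝ) := by linarith
            have e1 : (q : ℝ) ^ d = (q : ℝ) * (q : ℝ) ^ (d - 1) := by
              conv_lhs => rw [show d = 1 + (d - 1) by omega]
              rw [pow_add, pow_one]
            have e2 : (p : ℝ) ^ d = (p : ℝ) * (p : ℝ) ^ (d - 1) := by
              conv_lhs => rw [show d = 1 + (d - 1) by omega]
              rw [pow_add, pow_one]
            have hppow : M ^ (d - 1) ≤ (p : ℝ) ^ (d - 1) :=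
              pow_le_pow_left₀ (by linarith) hp _
            have hqpow : (p : ℝ) ^ (d - 1) ≤ (q : ℝ) ^ (d - 1) :=
              pow_le_pow_left₀ (by linarith) (by linarith) _
            have hpowpos : (0 : ℝ) < (p : ℝ) ^ (d - 1) := by positivity
            rw [e1, e2]
            calc (p : ℝ) * (p : ℝ) ^ (d - 1) + M ^ (d - 1)
                ≤ (p : ℝ) * (p : ℝ) ^ (d - 1) + (p : ℝ) ^ (d - 1) := by linarith
              _ = ((p : ℝ) + 1) * (p : ℝ) ^ (d - 1) := by ring
              _ ≤ (q : ℝ) * (p : ℝ) ^ (d - 1) := by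
                  apply mul_le_mul_of_nonneg_right hq (le_of_lt hpowpos)
              _ ≤ (q : ℝ) * (q : ℝ) ^ (d - 1) := by
                  apply mul_le_mul_of_nonneg_left hqpow hqpos
          -- |a i0| = A
          have hai0 : ((a i0).natAbs : ℕ) = A := hi0.symm
          have hai0r : |(a i0 : ℝ)| = (A : ℝ) := by
            rw [← Int.cast_abs, Int.abs_eq_natAbs, hai0]
            push_cast
            ring
          -- from floor equality: |u - v| < g
          have hflt : |(a i0 : ℝ) * (x i0 : ℝ) ^ d - (a i0 : ℝ) * (x' i0 : ℝ) ^ d| < g := by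
            simp only [hφ] at hφeq
            have h1 : (⌊((a i0 : ℝ) * (x i0 : ℝ) ^ d) / g⌋ : ℝ)
                ≤ ((a i0 : ℝ) * (x i0 : ℝ) ^ d) / g := Int.floor_le _
            have h2 : ((a i0 : ℝ) * (x i0 : ℝ) ^ d) / g
                < (⌊((a i0 : ℝ) * (x i0 : ℝ) ^ d) / g⌋ : ℝ) + 1 := Int.lt_floor_add_one _
            have h3 : (⌊((a i0 : ℝ) * (x' i0 : ℝ) ^ d) / g⌋ : ℝ)
                ≤ ((a i0 : ℝ) * (x' i0 : ℝ) ^ d) / g := Int.floor_le _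
            have h4 : ((a i0 : ℝ) * (x' i0 : ℝ) ^ d) / g
                < (⌊((a i0 : ℝ) * (x' i0 : ℝ) ^ d) / g⌋ : ℝ) + 1 := Int.lt_floor_add_one _
            rw [hφeq] at h1 h2
            have h5 : ((a i0 : ℝ) * (x i0 : ℝ) ^ d - (a i0 : ℝ) * (x' i0 : ℝ) ^ d) / g < 1 := by
              rw [← div_sub_div_same]
              linarith
            have h6 : ((a i0 : ℝ) * (x' i0 : ℝ) ^ d - (a i0 : ℝ) * (x i0 : ℝ) ^ d) / g < 1 := by
              rw [← div_sub_div_same]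
              linarith
            rw [abs_sub_lt_iff]
            exact ⟨(div_lt_one hgpos).mp h5, (div_lt_one hgpos).mp h6⟩
          -- but the gap is at least g
          have hgap : g ≤ |(a i0 : ℝ) * (x i0 : ℝ) ^ d - (a i0 : ℝ) * (x' i0 : ℝ) ^ d| := by
            rw [← mul_sub, abs_mul, hai0r]
            have hd' : M ^ (d - 1) ≤ |(x i0 : ℝ) ^ d - (x' i0 : ℝ) ^ d| := by
              rcases lt_or_gt_of_ne hne with h | h
              · rw [abs_sub_comm, abs_of_nonneg (by
                  have := gaplem (x i0) (x' i0) hkx.1 h; nlinarith)]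
                have := gaplem (x i0) (x' i0) hkx.1 h
                linarith
              · rw [abs_of_nonneg (by
                  have := gaplem (x' i0) (x i0) hkx'.1 h; nlinarith)]
                have := gaplem (x' i0) (x i0) hkx'.1 h
                linarith
            rw [hg]
            calc M ^ (d - 1) * (A : ℝ) ≤ |(x i0 : ℝ) ^ d - (x' i0 : ℝ) ^ d| * (A : ℝ) := by
                  apply mul_le_mul_of_nonneg_right hd' (le_of_lt hApos)
              _ = (A : ℝ) * |(x i0 : ℝ) ^ d - (x' i0 : ℝ) ^ d| := by ring
          linarith
        · rw [Finset.mem_filter] at *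
          calc x i = π x i := by simp [hπ, Function.update_of_ne hi]
            _ = π x' i := by rw [hx.2, hx'.2]
            _ = x' i := by simp [hπ, Function.update_of_ne hi]
      -- fiber maps into an interval of integers
      have hmaps : ∀ x ∈ s.filter (fun x => π x = y),
          φ x ∈ Finset.Icc ⌊(-H - c) / g⌋ ⌊(H - c) / g⌋ := by
        intro x hx
        obtain ⟨-, -, h1, h2⟩ := key x hx
        rw [Finset.mem_Icc, hφ]
        exact ⟨Int.floor_le_floor (by apply div_le_div_of_nonneg_right h1 hgpos.le),
          Int.floor_le_floor (by apply div_le_div_of_nonneg_right h2 hgpos.le)⟩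
      have := Finset.card_le_card_of_injOn φ hmaps hinj
      refine le_trans this ?_
      rw [Int.card_Icc]
      rw [Int.toNat_le]
      have hdiff : (H - c) / g - (-H - c) / g = 2 * H / g := by
        field_simp
        ring
      have := floor_sub_floor_le_aux ((H - c) / g) ((-H - c) / g)
      rw [hdiff] at this
      have htn : ⌊2 * H / g⌋ ≤ ((⌊2 * H / g⌋).toNat : ℤ) := Int.self_le_toNat _
      rw [hn]
      push_cast
      omega
  -- Step 3 : B'.card = I.card ^ (k - 1)
  have step3 : B'.card = I.card ^ (k - 1) := by
    rw [hB', Fintype.card_piFinset]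
    rw [← Finset.prod_erase_mul _ _ (Finset.mem_univ i0)]
    rw [if_pos rfl, Finset.card_singleton, mul_one]
    rw [Finset.prod_congr rfl (fun i hi => by
      rw [if_neg (Finset.mem_erase.mp hi).1])]
    rw [Finset.prod_const, Finset.card_erase_of_mem (Finset.mem_univ i0)]
    simp [Finset.card_univ]
  -- Step 4 : real bounds
  have hIcard : (I.card : ℝ) ≤ 2 * M := by
    rw [hI, Int.card_Icc]
    set z : ℤ := ⌊2 * M⌋ + 1 - ⌈M⌉ with hz
    rcases le_or_gt z 0 with h | h
    · rw [Int.toNat_of_nonpos h]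
      push_cast
      linarith
    · have : (z.toNat : ℤ) = z := Int.toNat_of_nonneg (le_of_lt h)
      have hzr : (z.toNat : ℝ) = (z : ℝ) := by exact_mod_cast this
      rw [hzr, hz]
      push_cast
      have h1 : (⌊2 * M⌋ : ℝ) ≤ 2 * M := Int.floor_le _
      have h2 : M ≤ (⌈M⌉ : ℝ) := Int.le_ceil _
      linarith
  have hnr : (n : ℝ) ≤ 2 * H / g + 2 := by
    rw [hn]
    push_cast
    have h0 : (0 : ℝ) ≤ 2 * H / g := by positivity
    have : ((⌊2 * H / g⌋.toNat : ℤ) : ℝ) ≤ 2 * H / g := by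
      rw [Int.toNat_of_nonneg (Int.floor_nonneg.mpr h0)]
      exact Int.floor_le _
    push_cast at this
    linarith
  -- put everything together
  have hfinal : (Ncount d k a M H : ℝ) ≤ (2 * H / g + 2) * (2 * M) ^ (k - 1) := by
    have h1 : (Ncount d k a M H : ℝ) ≤ (n : ℝ) * (I.card : ℝ) ^ (k - 1) := by
      have : Ncount d k a M H ≤ n * I.card ^ (k - 1) := by
        rw [← step3]; exact le_trans step1 step2
      exact_mod_cast this
    refine le_trans h1 ?_
    apply mul_le_mul hnr (pow_le_pow_left₀ (by positivity) hIcard _)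
      (by positivity) (by positivity)
  refine le_trans hfinal ?_
  have hpow : (2 : ℝ) ^ (k - 1) * 2 = 2 ^ k := by
    rw [← pow_succ]
    congr 1
    omega
  have : (2 * M) ^ (k - 1) = 2 ^ (k - 1) * M ^ (k - 1) := mul_pow 2 M (k - 1)
  rw [this]
  have hglhs : 2 * H / g + 2 = 2 * (H / g + 1) := by ring
  rw [hglhs]
  rw [hg]
  have : (2 * (H / (M ^ (d - 1) * (A : ℝ)) + 1)) * (2 ^ (k - 1) * M ^ (k - 1))
      = (2 ^ (k - 1) * 2) * M ^ (k - 1) * (H / (M ^ (d - 1) * (A : ℝ)) + 1) := by ring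
  rw [this, hpow]
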